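/- Let n be a positive integer, s a non-negative integer, and p a prime dividing n·(s+1). If ν_p(C(n+s,s)) = 0, then g₁(x) = g₁(x,n,s) has no factor of degree 1 in ℚ[x]. -/

import Mathlib

open Polynomial Finset

/-- g₁(x,n,s) = n!·∑_{j=0}^{n} C(n+s−j, n−j)·x^j/j!, as a polynomial over ℚ. -/
noncomputable def g1 (n s : ℕ) : ℚ[X] :=
  (n.factorial : ℚ[X]) *
    ∑ j ∈ Finset.range (n + 1),
      Polynomial.C (((n + s - j).choose (n - j) : ℚ) / (j.factorial : ℚ)) * Polynomial.X ^ j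

/-!
`g₁` is monic with integer coefficients `a_j = (n!/j!)·C(n+s−j, n−j)`, so a linear factor gives
an integer root `m`. As `p ∤ C(n+s, s)` and `(s+1)·C(n+s, s+1) = n·C(n+s, s)`, the prime `p`
divides `n`, hence every `a_j` with `j < n`; reducing mod `p` forces `p ∣ m`. But then
`ν_p(a_j m^j) ≥ ν_p(n!) − ν_p(j!) + j > ν_p(n!) = ν_p(a_0)` for `j ≥ 1`, so the constant term
cannot cancel the others.
-/

namespace Polynomial

variable {R : Type*} [CommRing R]

theorem Monic.dvd_of_isRoot_of_dvd_coeff {f : R[X]} {p m : R} (hp : Prime p) (hf : f.Monic)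
    (hcoeff : ∀ j < f.natDegree, p ∣ f.coeff j) (hroot : f.IsRoot m) : p ∣ m := by
  have h := hroot.eq_zero
  rw [eval_eq_sum_range, sum_range_succ, hf.coeff_natDegree, one_mul] at h
  have hlower : p ∣ ∑ j ∈ range f.natDegree, f.coeff j * m ^ j :=
    dvd_sum fun j hj => (hcoeff j (mem_range.mp hj)).mul_right _
  have hlead : p ∣ m ^ f.natDegree := by
    rw [eq_neg_of_add_eq_zero_right h]
    exact hlower.neg_right
  exact hp.dvd_of_dvd_pow hlead

theorem dvd_coeff_zero_of_isRoot {f : R[X]} {p m q : R} (hm : p ∣ m) (hroot : f.IsRoot m)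
    (hcoeff : ∀ j, 1 ≤ j → q ∣ f.coeff j * p ^ j) : q ∣ f.coeff 0 := by
  have h := hroot.eq_zero
  rw [eval_eq_sum_range, sum_range_succ', pow_zero, mul_one] at h
  have hhigher : q ∣ ∑ j ∈ range f.natDegree, f.coeff (j + 1) * m ^ (j + 1) :=
    dvd_sum fun j _ =>
      (hcoeff (j + 1) le_add_self).trans (mul_dvd_mul_left _ (pow_dvd_pow_of_dvd hm _))
  rw [eq_neg_of_add_eq_zero_right h]
  exact hhigher.neg_right

theorem Monic.exists_isRoot_of_dvd_map {A K : Type*} [CommRing A] [IsDomain A]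
    [UniqueFactorizationMonoid A] [Field K] [Algebra A K] [IsFractionRing A K] {f : A[X]}
    (hf : f.Monic) {q : K[X]} (hq : q.natDegree = 1) (hdvd : q ∣ f.map (algebraMap A K)) :
    ∃ m : A, f.IsRoot m := by
  obtain ⟨r, hr⟩ :=
    exists_root_of_degree_eq_one ((degree_eq_iff_natDegree_eq_of_pos one_pos).mpr hq)
  have hfr : aeval r f = 0 := by
    rw [aeval_def, eval₂_eq_eval_map]
    exact (hr.dvd hdvd).eq_zero
  obtain ⟨m, rfl⟩ := isInteger_of_is_root_of_monic hf hfr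
  refine ⟨m, IsFractionRing.injective A K ?_⟩
  rw [← aeval_algebraMap_apply_eq_algebraMap_eval, hfr, map_zero]

end Polynomial

theorem Nat.Prime.dvd_of_dvd_mul_succ_of_not_dvd_choose {p n s : ℕ} (hp : p.Prime)
    (h : p ∣ n * (s + 1)) (hC : ¬ p ∣ (n + s).choose s) : p ∣ n := by
  rcases hp.dvd_mul.mp h with hn | hs
  · exact hn
  have hid : (n + s).choose (s + 1) * (s + 1) = (n + s).choose s * n := by
    simpa using Nat.choose_succ_right_eq (n + s) s
  have : p ∣ (n + s).choose s * n := hid ▸ hs.mul_left _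
  exact (hp.dvd_mul.mp this).resolve_left hC

/-- `a_j = (n!/j!)·C(n+s−j, n−j)`, the coefficient of `X^j` in `g1 n s` when `j ≤ n`. -/
def g1Coeff (n s j : ℕ) : ℕ := n.descFactorial (n - j) * (n + s - j).choose (n - j)

noncomputable def g1Int (n s : ℕ) : ℤ[X] :=
  ∑ j ∈ range (n + 1), C (g1Coeff n s j : ℤ) * X ^ j

section g1

variable {n s j : ℕ}

theorem g1Coeff_mul_factorial (hj : j ≤ n) :
    g1Coeff n s j * j.factorial = n.factorial * (n + s - j).choose (n - j) := by
  have h := Nat.factorial_mul_descFactorial (Nat.sub_le n j)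
  rw [Nat.sub_sub_self hj] at h
  rw [g1Coeff, ← h]
  ring

theorem g1Coeff_ne_zero (hj : j ≤ n) : g1Coeff n s j ≠ 0 := by
  have := g1Coeff_mul_factorial (s := s) hj
  intro h0
  rw [h0, zero_mul] at this
  exact mul_ne_zero n.factorial_ne_zero (Nat.choose_pos (by omega)).ne' this.symm

@[simp] theorem g1Coeff_self : g1Coeff n s n = 1 := by
  simp [g1Coeff]

theorem g1Coeff_zero : g1Coeff n s 0 = n.factorial * (n + s).choose s := by
  rw [g1Coeff, Nat.sub_zero, Nat.sub_zero, Nat.descFactorial_self, Nat.choose_symm_add]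

theorem dvd_g1Coeff_of_lt (hj : j < n) : n ∣ g1Coeff n s j := by
  obtain ⟨k, hk⟩ : ∃ k, n - j = k + 1 := ⟨n - j - 1, by omega⟩
  obtain ⟨n', rfl⟩ : ∃ n', n = n' + 1 := ⟨n - 1, by omega⟩
  rw [g1Coeff, hk, Nat.succ_descFactorial_succ, mul_assoc]
  exact dvd_mul_right _ _

theorem padicValNat_factorial_lt_padicValNat_g1Coeff_add {p : ℕ} [Fact p.Prime] (hj : 1 ≤ j)
    (hjn : j ≤ n) : padicValNat p n.factorial < padicValNat p (g1Coeff n s j) + j := by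
  have h := congrArg (padicValNat p) (g1Coeff_mul_factorial (s := s) hjn)
  rw [padicValNat.mul (g1Coeff_ne_zero hjn) j.factorial_ne_zero,
    padicValNat.mul n.factorial_ne_zero (Nat.choose_pos (by omega)).ne'] at h
  have := padicValNat_factorial_lt_of_ne_zero p (show j ≠ 0 by omega)
  omega

theorem coeff_g1Int : (g1Int n s).coeff j = if j ≤ n then (g1Coeff n s j : ℤ) else 0 := by
  simp [g1Int, coeff_X_pow]

theorem coeff_g1Int_of_le (hj : j ≤ n) : (g1Int n s).coeff j = g1Coeff n s j := by
  rw [coeff_g1Int, if_pos hj]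

theorem natDegree_g1Int_le : (g1Int n s).natDegree ≤ n :=
  natDegree_le_iff_coeff_eq_zero.mpr fun j hj => by
    rw [coeff_g1Int, if_neg (not_le.mpr hj)]

theorem g1Int_monic : (g1Int n s).Monic :=
  monic_of_natDegree_le_of_coeff_eq_one n natDegree_g1Int_le (by simp [coeff_g1Int_of_le])

theorem natDegree_g1Int : (g1Int n s).natDegree = n :=
  natDegree_eq_of_le_of_coeff_ne_zero natDegree_g1Int_le (by simp [coeff_g1Int_of_le])

theorem map_g1Int : (g1Int n s).map (algebraMap ℤ ℚ) = g1 n s := by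
  rw [g1Int, Polynomial.map_sum, g1, ← C_eq_natCast, mul_sum]
  refine sum_congr rfl fun j hj => ?_
  have hjn : j ≤ n := Nat.lt_succ_iff.mp (mem_range.mp hj)
  rw [Polynomial.map_mul, map_C, Polynomial.map_pow, map_X, ← mul_assoc, ← C_mul]
  congr 2
  rw [eq_intCast, Int.cast_natCast, mul_div_assoc', eq_div_iff (by positivity)]
  exact_mod_cast g1Coeff_mul_factorial hjn

theorem dvd_coeff_g1Int_of_lt (hj : j < n) : (n : ℤ) ∣ (g1Int n s).coeff j := by
  rw [coeff_g1Int_of_le hj.le]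
  exact_mod_cast dvd_g1Coeff_of_lt hj

theorem pow_succ_dvd_coeff_g1Int_mul_pow {p : ℕ} [hp : Fact p.Prime] (hj : 1 ≤ j) :
    (p : ℤ) ^ (padicValNat p n.factorial + 1) ∣ (g1Int n s).coeff j * p ^ j := by
  rw [coeff_g1Int]
  split_ifs with hjn
  · have hne : g1Coeff n s j * p ^ j ≠ 0 :=
      mul_ne_zero (g1Coeff_ne_zero hjn) (pow_ne_zero _ hp.out.ne_zero)
    have : p ^ (padicValNat p n.factorial + 1) ∣ g1Coeff n s j * p ^ j := by
      rw [padicValNat_dvd_iff_le hne, padicValNat.mul (g1Coeff_ne_zero hjn)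
        (pow_ne_zero _ hp.out.ne_zero), padicValNat.prime_pow]
      exact padicValNat_factorial_lt_padicValNat_g1Coeff_add hj hjn
    exact_mod_cast this
  · simp

end g1

theorem g1_no_linear_factor_of_u_eq_zero_general (n s : ℕ)
    (p : ℕ) (hp : p.Prime) (hpdvd : p ∣ n * (s + 1))
    (hu : padicValNat p ((n + s).choose s) = 0) :
    ¬ ∃ q : ℚ[X], q.natDegree = 1 ∧ q ∣ g1 n s := by
  rintro ⟨q, hq, hdvd⟩
  have := Fact.mk hp
  obtain ⟨m, hm⟩ := g1Int_monic.exists_isRoot_of_dvd_map hq (map_g1Int.symm ▸ hdvd)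
  have hchoose : (n + s).choose s ≠ 0 := (Nat.choose_pos le_add_self).ne'
  have hpn : p ∣ n := hp.dvd_of_dvd_mul_succ_of_not_dvd_choose hpdvd
    fun h => (dvd_iff_padicValNat_ne_zero hchoose).mp h hu
  have hpm : (p : ℤ) ∣ m := g1Int_monic.dvd_of_isRoot_of_dvd_coeff (Nat.prime_iff_prime_int.mp hp)
    (fun j hj => (Int.natCast_dvd_natCast.mpr hpn).trans
      (dvd_coeff_g1Int_of_lt (by rwa [natDegree_g1Int] at hj))) hm
  have hcoeff0 := dvd_coeff_zero_of_isRoot hpm hm fun j hj => pow_succ_dvd_coeff_g1Int_mul_pow hj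
  rw [coeff_g1Int_of_le n.zero_le, g1Coeff_zero, ← Nat.cast_pow, Int.natCast_dvd_natCast,
    padicValNat_dvd_iff_le (mul_ne_zero n.factorial_ne_zero hchoose),
    padicValNat.mul n.factorial_ne_zero hchoose, hu] at hcoeff0
  omega

theorem g1_no_linear_factor_of_u_eq_zero (n s : ℕ) (hn : 1 ≤ n)
    (p : ℕ) (hp : p.Prime) (hpdvd : p ∣ n * (s + 1))
    (hu : padicValNat p ((n + s).choose s) = 0) :
    ¬ ∃ q : ℚ[X], q.natDegree = 1 ∧ q ∣ g1 n s :=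
  g1_no_linear_factor_of_u_eq_zero_general n s p hp hpdvd hu
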